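/- arXiv:math/9210226 — 2 statements merged into one kernel-verified Lean document; each statement's English description precedes it below -/
import Mathlib

section
/- Suppose (w, A) is a solution of the Bartnik–McKinnon ODE system (2a)–(2b) on (0, ∞), satisfying the regularity conditions w(0⁺) = 1, w'(0⁺) = 0, A(0⁺) = 1, w''(0⁺) = −λ for some λ > 0, such that possibility (P₂) holds: for all r > 0 one has w(r) > −1, w'(r) < 0 and A(r) > 0. Then the orbit connects the rest points: w(r) → −1 and w'(r) → 0 as r → ∞, and moreover A(r) → 1 as r → ∞. -/
/-!
Along a (P₂) orbit `w` decreases from `1` and stays above `-1`, so it has a limit `L < 1`.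
The mass `m = r (1 - A) / 2` is nondecreasing, whence `A ≤ 1`, and `A w' - 1/r` is nondecreasing
and negative. The latter bounds `A w'` from below by some `-K`, which makes `m + K w + 1/(2r)`
nonincreasing and so keeps `m` bounded: `A → 1` and `Φ` stays bounded. Then `w'` has a limit,
which is `0` because `w` converges. Now (2a) gives `r² w'' → -L (1 - L²)`, so `r w' → L (1 - L²)`
by l'Hôpital, and this limit vanishes since otherwise `w` would grow like a multiple of `log r`.
Finally `L = 0` is impossible: near `w = 0` the equation is close to the oscillating Euler
equation `r² w'' + w = 0`, and indeed `g = -w'/w > 0` would obey `g' ≥ g²/2` and blow up in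
finite time. Hence `L = -1`.
-/

open Set Filter Topology

/-- The function `Φ(r) = r(1 - A(r)) - (1 - w(r)²)²/r` from the
Bartnik–McKinnon system. -/
noncomputable def Phi (w A : ℝ → ℝ) (r : ℝ) : ℝ :=
  r * (1 - A r) - (1 - (w r) ^ 2) ^ 2 / r

/-- `(w, A)` solves the Bartnik–McKinnon ODE system (2a)–(2b) on the set `s`:
`w` is C², `A` is C¹, and the equations
(2a) `r²·A·w'' + Φ·w' + w(1 - w²) = 0` and
(2b) `r·A' + (1 + 2w'²)·A = 1 - (1 - w²)²/r²`
hold on `s`. -/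
def IsBMSolutionOn (w A : ℝ → ℝ) (s : Set ℝ) : Prop :=
  ContDiffOn ℝ 2 w s ∧ ContDiffOn ℝ 1 A s ∧
  (∀ r ∈ s, r ^ 2 * A r * deriv (deriv w) r + Phi w A r * deriv w r
      + w r * (1 - (w r) ^ 2) = 0) ∧
  (∀ r ∈ s, r * deriv A r + (1 + 2 * (deriv w r) ^ 2) * A r
      = 1 - (1 - (w r) ^ 2) ^ 2 / r ^ 2)

/-- The regularity conditions at the origin:
`w(0⁺) = 1`, `w'(0⁺) = 0`, `A(0⁺) = 1`. -/
def RegularAtOrigin (w A : ℝ → ℝ) : Prop :=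
  Tendsto w (𝓝[>] (0 : ℝ)) (𝓝 1) ∧
  Tendsto (deriv w) (𝓝[>] (0 : ℝ)) (𝓝 0) ∧
  Tendsto A (𝓝[>] (0 : ℝ)) (𝓝 1)

/-- The condition `w''(0⁺) = -λ`. -/
def SecondDerivAtOrigin (w : ℝ → ℝ) (lam : ℝ) : Prop :=
  Tendsto (deriv (deriv w)) (𝓝[>] (0 : ℝ)) (𝓝 (-lam))

lemma monotoneOn_of_hasDerivAt_nonneg {s : Set ℝ} (hs : Convex ℝ s) {f f' : ℝ → ℝ}
    (hf : ∀ x ∈ s, HasDerivAt f (f' x) x) (hf' : ∀ x ∈ interior s, 0 ≤ f' x) :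
    MonotoneOn f s :=
  monotoneOn_of_hasDerivWithinAt_nonneg hs (fun x hx => (hf x hx).continuousAt.continuousWithinAt)
    (fun x hx => (hf x (interior_subset hx)).hasDerivWithinAt) hf'

lemma antitoneOn_of_hasDerivAt_nonpos {s : Set ℝ} (hs : Convex ℝ s) {f f' : ℝ → ℝ}
    (hf : ∀ x ∈ s, HasDerivAt f (f' x) x) (hf' : ∀ x ∈ interior s, f' x ≤ 0) :
    AntitoneOn f s :=
  antitoneOn_of_hasDerivWithinAt_nonpos hs (fun x hx => (hf x hx).continuousAt.continuousWithinAt)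
    (fun x hx => (hf x (interior_subset hx)).hasDerivWithinAt) hf'

lemma AntitoneOn.le_of_tendsto_nhdsGT {f : ℝ → ℝ} {a c x : ℝ} (hf : AntitoneOn f (Ioi a))
    (hc : Tendsto f (𝓝[>] a) (𝓝 c)) (hx : a < x) : f x ≤ c :=
  ge_of_tendsto hc <| by
    filter_upwards [Ioo_mem_nhdsGT hx] with y hy using hf hy.1 (hy.1.trans hy.2) hy.2.le

lemma MonotoneOn.ge_of_tendsto_nhdsGT {f : ℝ → ℝ} {a c x : ℝ} (hf : MonotoneOn f (Ioi a))
    (hc : Tendsto f (𝓝[>] a) (𝓝 c)) (hx : a < x) : c ≤ f x :=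
  le_of_tendsto hc <| by
    filter_upwards [Ioo_mem_nhdsGT hx] with y hy using hf hy.1 (hy.1.trans hy.2) hy.2.le

lemma MonotoneOn.exists_tendsto_atTop {f : ℝ → ℝ} {a : ℝ} (hf : MonotoneOn f (Ici a))
    (hb : BddAbove (f '' Ici a)) : ∃ ℓ, Tendsto f atTop (𝓝 ℓ) := by
  have hmono : Monotone fun x => f (max a x) := fun x y hxy =>
    hf (mem_Ici.2 (le_max_left a x)) (mem_Ici.2 (le_max_left a y)) (max_le_max le_rfl hxy)
  have hbdd : BddAbove (range fun x => f (max a x)) :=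
    hb.mono (range_subset_iff.2 fun x => mem_image_of_mem f (mem_Ici.2 (le_max_left a x)))
  refine ⟨_, (tendsto_atTop_ciSup hmono hbdd).congr' ?_⟩
  filter_upwards [eventually_ge_atTop a] with x hx using by rw [max_eq_right hx]

lemma tendsto_atTop_of_hasDerivAt_ge {f f' g g' : ℝ → ℝ} (hg : Tendsto g atTop atTop)
    (hf : ∀ᶠ x in atTop, HasDerivAt f (f' x) x) (hg' : ∀ᶠ x in atTop, HasDerivAt g (g' x) x)
    (hle : ∀ᶠ x in atTop, g' x ≤ f' x) : Tendsto f atTop atTop := by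
  obtain ⟨R, hR⟩ := eventually_atTop.1 ((hf.and hg').and hle)
  have hmono : MonotoneOn (fun x => f x - g x) (Ici R) :=
    monotoneOn_of_hasDerivAt_nonneg (convex_Ici R) (fun x hx => (hR x hx).1.1.sub (hR x hx).1.2)
      fun x hx => sub_nonneg.2 (hR x (interior_subset hx)).2
  refine tendsto_atTop_mono' _ ?_ (tendsto_atTop_add_const_left _ (f R - g R) hg)
  filter_upwards [eventually_ge_atTop R] with x hx
  linarith [hmono self_mem_Ici hx hx]

lemma eq_zero_of_tendsto_of_tendsto_deriv {f f' : ℝ → ℝ} {L ℓ : ℝ}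
    (hf : Tendsto f atTop (𝓝 L)) (hd : ∀ᶠ x in atTop, HasDerivAt f (f' x) x)
    (hf' : Tendsto f' atTop (𝓝 ℓ)) : ℓ = 0 := by
  wlog hℓ : 0 ≤ ℓ generalizing f f' L ℓ
  · exact neg_eq_zero.1 <| this hf.neg (hd.mono fun x hx => hx.neg) hf'.neg (by linarith)
  refine hℓ.antisymm' (not_lt.1 fun hpos => not_tendsto_nhds_of_tendsto_atTop ?_ L hf)
  refine tendsto_atTop_of_hasDerivAt_ge (g := fun x => ℓ / 2 * x)
    (tendsto_id.const_mul_atTop (half_pos hpos)) hd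
    (Eventually.of_forall fun x => (hasDerivAt_id x).const_mul _) ?_
  filter_upwards [hf'.eventually (eventually_ge_nhds (half_lt_self hpos))] with x hx
  simpa using hx

lemma eq_zero_of_tendsto_of_tendsto_mul_deriv {f f' : ℝ → ℝ} {L m : ℝ}
    (hf : Tendsto f atTop (𝓝 L)) (hd : ∀ᶠ x in atTop, HasDerivAt f (f' x) x)
    (hf' : Tendsto (fun x => x * f' x) atTop (𝓝 m)) : m = 0 := by
  wlog hm : 0 ≤ m generalizing f f' L m
  · refine neg_eq_zero.1 <| this hf.neg (hd.mono fun x hx => hx.neg) ?_ (by linarith)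
    simpa using hf'.neg
  refine hm.antisymm' (not_lt.1 fun hpos => not_tendsto_nhds_of_tendsto_atTop ?_ L hf)
  refine tendsto_atTop_of_hasDerivAt_ge (g := fun x => m / 2 * Real.log x)
    (g' := fun x => m / 2 * x⁻¹)
    (Real.tendsto_log_atTop.const_mul_atTop (half_pos hpos)) hd ?_ ?_
  · filter_upwards [eventually_gt_atTop 0] with x hx
      using (Real.hasDerivAt_log hx.ne').const_mul _
  filter_upwards [hf'.eventually (eventually_ge_nhds (half_lt_self hpos)), eventually_gt_atTop 0]
    with x hx hx0
  rw [← div_eq_mul_inv, div_le_iff₀ hx0, mul_comm]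
  exact hx

lemma tendsto_mul_deriv_of_tendsto_sq_mul_deriv {f' f'' : ℝ → ℝ} {k : ℝ}
    (hd : ∀ᶠ x in atTop, HasDerivAt f' (f'' x) x) (hf' : Tendsto f' atTop (𝓝 0))
    (hf'' : Tendsto (fun x => x ^ 2 * f'' x) atTop (𝓝 k)) :
    Tendsto (fun x => x * f' x) atTop (𝓝 (-k)) := by
  have hlh := HasDerivAt.lhopital_zero_atTop (g := fun x => x⁻¹) (l := 𝓝 (-k)) hd
    (by filter_upwards [eventually_gt_atTop 0] with x hx using hasDerivAt_inv hx.ne')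
    (by filter_upwards [eventually_gt_atTop 0] with x hx using by simp [hx.ne'])
    hf' tendsto_inv_atTop_zero ?_
  · refine hlh.congr' ?_
    filter_upwards [eventually_gt_atTop 0] with x hx
    field_simp
  · refine hf''.neg.congr' ?_
    filter_upwards [eventually_gt_atTop 0] with x hx
    field_simp

lemma not_eventually_pos_of_sq_le_deriv {g g' : ℝ → ℝ} {c : ℝ} (hc : 0 < c)
    (hd : ∀ᶠ x in atTop, HasDerivAt g (g' x) x) (hric : ∀ᶠ x in atTop, c * g x ^ 2 ≤ g' x) :
    ¬ ∀ᶠ x in atTop, 0 < g x := by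
  intro hpos
  obtain ⟨R, hR⟩ := eventually_atTop.1 ((hd.and hric).and hpos)
  have hanti : AntitoneOn (fun x => (g x)⁻¹ + c * x) (Ici R) := by
    refine antitoneOn_of_hasDerivAt_nonpos (convex_Ici R)
      (fun x hx => ((hR x hx).1.1.inv (hR x hx).2.ne').add ((hasDerivAt_id x).const_mul c))
      fun x hx => ?_
    obtain ⟨⟨-, hle⟩, hgx⟩ := hR x (interior_subset hx)
    rw [mul_one, neg_div, neg_add_le_iff_le_add, add_zero, le_div_iff₀ (by positivity)]
    exact hle
  set T := R + ((g R)⁻¹ + 1) / c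
  have hRT : R ≤ T := le_add_of_nonneg_right (by have := (hR R le_rfl).2; positivity)
  have hT := hanti self_mem_Ici hRT hRT
  have hgT := inv_pos.2 (hR T hRT).2
  have : c * T = c * R + ((g R)⁻¹ + 1) := by simp only [T]; field_simp
  linarith

lemma sq_one_sub_sq_le_one {x : ℝ} (h₁ : -1 ≤ x) (h₂ : x ≤ 1) : (1 - x ^ 2) ^ 2 ≤ 1 := by
  have : x ^ 2 ≤ 1 := by nlinarith
  nlinarith [sq_nonneg x]

noncomputable def mass (A : ℝ → ℝ) (r : ℝ) : ℝ := r * (1 - A r) / 2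

def PossibilityP2 (w A : ℝ → ℝ) : Prop :=
  ∀ r : ℝ, 0 < r → -1 < w r ∧ deriv w r < 0 ∧ 0 < A r

namespace IsBMSolutionOn

variable {w A : ℝ → ℝ} {s : Set ℝ} {r : ℝ}

lemma yangMills (h : IsBMSolutionOn w A s) (hr : r ∈ s) :
    r ^ 2 * A r * deriv (deriv w) r + Phi w A r * deriv w r + w r * (1 - w r ^ 2) = 0 :=
  h.2.2.1 r hr

lemma einstein (h : IsBMSolutionOn w A s) (hr : r ∈ s) :
    r * deriv A r + (1 + 2 * deriv w r ^ 2) * A r = 1 - (1 - w r ^ 2) ^ 2 / r ^ 2 :=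
  h.2.2.2 r hr

lemma hasDerivAt_w (h : IsBMSolutionOn w A s) (hs : IsOpen s) (hr : r ∈ s) :
    HasDerivAt w (deriv w r) r :=
  ((h.1.differentiableOn (by norm_num)).differentiableAt (hs.mem_nhds hr)).hasDerivAt

lemma hasDerivAt_deriv_w (h : IsBMSolutionOn w A s) (hs : IsOpen s) (hr : r ∈ s) :
    HasDerivAt (deriv w) (deriv (deriv w) r) r :=
  (((h.1.deriv_of_isOpen (m := 1) hs (by norm_num)).differentiableOn (by norm_num)).differentiableAt
    (hs.mem_nhds hr)).hasDerivAt

lemma hasDerivAt_A (h : IsBMSolutionOn w A s) (hs : IsOpen s) (hr : r ∈ s) :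
    HasDerivAt A (deriv A r) r :=
  ((h.2.1.differentiableOn (by norm_num)).differentiableAt (hs.mem_nhds hr)).hasDerivAt

lemma hasDerivAt_mass (h : IsBMSolutionOn w A s) (hs : IsOpen s) (hr : r ∈ s) (hr0 : r ≠ 0) :
    HasDerivAt (mass A) (deriv w r ^ 2 * A r + (1 - w r ^ 2) ^ 2 / (2 * r ^ 2)) r := by
  refine (((hasDerivAt_id r).mul ((hasDerivAt_const r 1).sub (h.hasDerivAt_A hs hr))).div_const
    2).congr_deriv ?_
  simp only [id_eq, Pi.sub_apply]
  linear_combination (norm := (field_simp; ring)) -h.einstein hr / 2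

lemma hasDerivAt_A_mul_deriv_w_sub_inv (h : IsBMSolutionOn w A s) (hs : IsOpen s) (hr : r ∈ s)
    (hr0 : r ≠ 0) :
    HasDerivAt (fun x => A x * deriv w x - x⁻¹)
      ((1 - w r * (1 - w r ^ 2) - 2 * r * A r * deriv w r ^ 3) / r ^ 2) r := by
  refine (((h.hasDerivAt_A hs hr).mul (h.hasDerivAt_deriv_w hs hr)).sub
    (hasDerivAt_inv hr0)).congr_deriv ?_
  have hy := h.yangMills hr
  simp only [Phi] at hy
  rw [eq_div_iff (pow_ne_zero 2 hr0)]
  linear_combination (norm := (field_simp; ring)) r * deriv w r * h.einstein hr + hy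

end IsBMSolutionOn

namespace PossibilityP2

variable {w A : ℝ → ℝ} {r : ℝ}

lemma strictAntiOn_w (hP2 : PossibilityP2 w A) (hsol : IsBMSolutionOn w A (Ioi 0)) :
    StrictAntiOn w (Ioi 0) :=
  strictAntiOn_of_deriv_neg (convex_Ioi 0)
    (fun _ hr => (hsol.hasDerivAt_w isOpen_Ioi hr).continuousAt.continuousWithinAt)
    fun r hr => (hP2 r (interior_subset hr)).2.1

lemma w_le_one (hP2 : PossibilityP2 w A) (hsol : IsBMSolutionOn w A (Ioi 0))
    (hreg : RegularAtOrigin w A) (hr : 0 < r) : w r ≤ 1 :=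
  (hP2.strictAntiOn_w hsol).antitoneOn.le_of_tendsto_nhdsGT hreg.1 hr

lemma mass_nonneg (hP2 : PossibilityP2 w A) (hsol : IsBMSolutionOn w A (Ioi 0))
    (hreg : RegularAtOrigin w A) (hr : 0 < r) : 0 ≤ mass A r := by
  have hmono : MonotoneOn (mass A) (Ioi 0) :=
    monotoneOn_of_hasDerivAt_nonneg (convex_Ioi 0)
      (fun x hx => hsol.hasDerivAt_mass isOpen_Ioi hx (ne_of_gt hx)) fun x hx => by
        have := (hP2 x (interior_subset hx)).2.2
        positivity
  have hlim : Tendsto (fun x => mass A x) (𝓝[>] 0) (𝓝 0) := by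
    simpa [mass] using ((tendsto_nhdsWithin_of_tendsto_nhds tendsto_id).mul
      (tendsto_const_nhds.sub hreg.2.2)).div_const 2
  exact hmono.ge_of_tendsto_nhdsGT hlim hr

lemma A_le_one (hP2 : PossibilityP2 w A) (hsol : IsBMSolutionOn w A (Ioi 0))
    (hreg : RegularAtOrigin w A) (hr : 0 < r) : A r ≤ 1 := by
  have := hP2.mass_nonneg hsol hreg hr
  rw [mass] at this
  nlinarith

lemma sq_one_sub_sq_w_le_one (hP2 : PossibilityP2 w A) (hsol : IsBMSolutionOn w A (Ioi 0))
    (hreg : RegularAtOrigin w A) (hr : 0 < r) : (1 - w r ^ 2) ^ 2 ≤ 1 :=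
  sq_one_sub_sq_le_one (hP2 r hr).1.le (hP2.w_le_one hsol hreg hr)

lemma monotoneOn_A_mul_deriv_w_sub_inv (hP2 : PossibilityP2 w A)
    (hsol : IsBMSolutionOn w A (Ioi 0)) :
    MonotoneOn (fun x => A x * deriv w x - x⁻¹) (Ioi 0) := by
  refine monotoneOn_of_hasDerivAt_nonneg (convex_Ioi 0)
    (fun x hx => hsol.hasDerivAt_A_mul_deriv_w_sub_inv isOpen_Ioi hx (ne_of_gt hx))
    fun x hx => ?_
  obtain ⟨hw, hw', hA⟩ := hP2 x (interior_subset hx)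
  have hx : 0 < x := interior_subset hx
  have h₁ : 0 ≤ 1 - w x * (1 - w x ^ 2) := by
    nlinarith [mul_nonneg (by linarith : 0 ≤ w x + 1) (sq_nonneg (w x - 1)), sq_nonneg (w x)]
  have h₂ : 0 ≤ 2 * x * A x * (-deriv w x) ^ 3 := by
    have := neg_pos.2 hw'
    positivity
  have : 0 ≤ 1 - w x * (1 - w x ^ 2) - 2 * x * A x * deriv w x ^ 3 := by
    linarith [show (-deriv w x) ^ 3 = -deriv w x ^ 3 by ring]
  positivity

lemma exists_mass_le (hP2 : PossibilityP2 w A) (hsol : IsBMSolutionOn w A (Ioi 0))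
    (hreg : RegularAtOrigin w A) : ∃ M, ∀ r, 1 ≤ r → mass A r ≤ M := by
  set K := 1 - A 1 * deriv w 1
  have hK : 0 ≤ K := by nlinarith [hP2 1 one_pos]
  have hAw' : ∀ r, 1 ≤ r → 0 ≤ A r * deriv w r + K := fun r hr => by
    have hmono := hP2.monotoneOn_A_mul_deriv_w_sub_inv hsol (mem_Ioi.2 one_pos)
      (mem_Ioi.2 (one_pos.trans_le hr)) hr
    simp only [inv_one] at hmono
    linarith [inv_nonneg.2 (zero_le_one.trans hr)]
  set G := fun x => mass A x + K * w x + x⁻¹ / 2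
  have hG : AntitoneOn G (Ici 1) := by
    refine antitoneOn_of_hasDerivAt_nonpos (convex_Ici 1) (f' := fun x =>
      deriv w x ^ 2 * A x + (1 - w x ^ 2) ^ 2 / (2 * x ^ 2) + K * deriv w x + -(x ^ 2)⁻¹ / 2)
      (fun x hx => ?_) fun x hx => ?_
    · have hx : 0 < x := one_pos.trans_le hx
      exact ((hsol.hasDerivAt_mass isOpen_Ioi hx (ne_of_gt hx)).add
        ((hsol.hasDerivAt_w isOpen_Ioi hx).const_mul K)).add
        ((hasDerivAt_inv (ne_of_gt hx)).div_const 2)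
    · have hx1 : 1 ≤ x := interior_subset hx
      have hx : 0 < x := one_pos.trans_le hx1
      have h₁ : deriv w x ^ 2 * A x + K * deriv w x ≤ 0 := by
        linarith [mul_nonpos_of_nonpos_of_nonneg (hP2 x hx).2.1.le (hAw' x hx1)]
      have h₂ : (1 - w x ^ 2) ^ 2 / (2 * x ^ 2) ≤ (x ^ 2)⁻¹ / 2 := by
        rw [div_le_iff₀ (by positivity)]
        field_simp
        exact hP2.sq_one_sub_sq_w_le_one hsol hreg hx
      linarith
  refine ⟨G 1 + K, fun r hr => ?_⟩
  have hGr := hG self_mem_Ici hr hr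
  have hr0 : 0 < r := one_pos.trans_le hr
  have := mul_le_mul_of_nonneg_left (hP2 r hr0).1.le hK
  have := inv_nonneg.2 hr0.le
  simp only [G] at hGr ⊢
  linarith

lemma tendsto_A_atTop (hP2 : PossibilityP2 w A) (hsol : IsBMSolutionOn w A (Ioi 0))
    (hreg : RegularAtOrigin w A) : Tendsto A atTop (𝓝 1) := by
  obtain ⟨M, hM⟩ := hP2.exists_mass_le hsol hreg
  have hlow : Tendsto (fun r => 1 - 2 * M * r⁻¹) atTop (𝓝 1) := by
    simpa using tendsto_const_nhds.sub (tendsto_inv_atTop_zero.const_mul (2 * M))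
  refine tendsto_of_tendsto_of_tendsto_of_le_of_le' hlow tendsto_const_nhds ?_ ?_
  · filter_upwards [eventually_ge_atTop 1] with r hr
    have hr0 : 0 < r := one_pos.trans_le hr
    have := hM r hr
    rw [mass] at this
    rw [← div_eq_mul_inv, sub_le_comm, le_div_iff₀ hr0]
    linarith
  · filter_upwards [eventually_gt_atTop 0] with r hr using hP2.A_le_one hsol hreg hr

lemma exists_abs_Phi_le (hP2 : PossibilityP2 w A) (hsol : IsBMSolutionOn w A (Ioi 0))
    (hreg : RegularAtOrigin w A) : ∃ C, ∀ r, 1 ≤ r → |Phi w A r| ≤ C := by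
  obtain ⟨M, hM⟩ := hP2.exists_mass_le hsol hreg
  refine ⟨2 * M + 1, fun r hr => ?_⟩
  have hr0 : 0 < r := one_pos.trans_le hr
  have h₁ := hP2.mass_nonneg hsol hreg hr0
  have h₂ : (1 - w r ^ 2) ^ 2 / r ≤ 1 :=
    (div_le_one hr0).2 ((hP2.sq_one_sub_sq_w_le_one hsol hreg hr0).trans hr)
  have h₃ : 0 ≤ (1 - w r ^ 2) ^ 2 / r := by positivity
  have hPhi : Phi w A r = 2 * mass A r - (1 - w r ^ 2) ^ 2 / r := by rw [Phi, mass]; ring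
  rw [hPhi, abs_le]
  constructor <;> linarith [hM r hr]

lemma exists_tendsto_w (hP2 : PossibilityP2 w A) (hsol : IsBMSolutionOn w A (Ioi 0)) :
    ∃ L, Tendsto w atTop (𝓝 L) ∧ ∀ r, 0 < r → L < w r := by
  have hanti := (hP2.strictAntiOn_w hsol).antitoneOn
  obtain ⟨ℓ, hℓ⟩ := (hanti.mono (Ici_subset_Ioi.2 one_pos)).neg.exists_tendsto_atTop
    ⟨1, by rintro _ ⟨x, hx, rfl⟩; linarith [hP2 x (one_pos.trans_le hx)]⟩
  have hL : Tendsto w atTop (𝓝 (-ℓ)) := by simpa using hℓ.neg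
  refine ⟨-ℓ, hL, fun r hr => ?_⟩
  have hr1 : r < r + 1 := lt_add_one r
  refine lt_of_le_of_lt (le_of_tendsto hL ?_) (hP2.strictAntiOn_w hsol hr (hr.trans hr1) hr1)
  filter_upwards [eventually_ge_atTop (r + 1)] with t ht
  exact hanti (hr.trans hr1) (hr.trans (hr1.trans_le ht)) ht

lemma tendsto_deriv_w_atTop (hP2 : PossibilityP2 w A) (hsol : IsBMSolutionOn w A (Ioi 0))
    (hreg : RegularAtOrigin w A) : Tendsto (deriv w) atTop (𝓝 0) := by
  obtain ⟨L, hL, -⟩ := hP2.exists_tendsto_w hsol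
  obtain ⟨ℓ, hℓ⟩ := ((hP2.monotoneOn_A_mul_deriv_w_sub_inv hsol).mono
    (Ici_subset_Ioi.2 one_pos)).exists_tendsto_atTop ⟨0, by
      rintro _ ⟨x, hx, rfl⟩
      obtain ⟨-, hw', hA⟩ := hP2 x (one_pos.trans_le hx)
      have := inv_nonneg.2 (zero_le_one.trans (mem_Ici.1 hx))
      nlinarith⟩
  have hw' : Tendsto (deriv w) atTop (𝓝 ℓ) := by
    have := (hℓ.add tendsto_inv_atTop_zero).div (hP2.tendsto_A_atTop hsol hreg) one_ne_zero
    rw [add_zero, div_one] at this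
    refine this.congr' ?_
    filter_upwards [eventually_gt_atTop 0] with x hx
    rw [Pi.div_apply, sub_add_cancel, mul_div_cancel_left₀ _ (hP2 x hx).2.2.ne']
  obtain rfl := eq_zero_of_tendsto_of_tendsto_deriv hL
    (by filter_upwards [eventually_gt_atTop 0] with x hx using hsol.hasDerivAt_w isOpen_Ioi hx) hw'
  exact hw'

lemma tendsto_sq_mul_deriv_deriv_w (hP2 : PossibilityP2 w A) (hsol : IsBMSolutionOn w A (Ioi 0))
    (hreg : RegularAtOrigin w A) {L : ℝ} (hL : Tendsto w atTop (𝓝 L)) :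
    Tendsto (fun r => r ^ 2 * deriv (deriv w) r) atTop (𝓝 (-(L * (1 - L ^ 2)))) := by
  obtain ⟨C, hC⟩ := hP2.exists_abs_Phi_le hsol hreg
  have hPhi : Tendsto (fun r => Phi w A r * deriv w r) atTop (𝓝 0) :=
    isBoundedUnder_le_mul_tendsto_zero
      (isBoundedUnder_of_eventually_le (a := C) (eventually_atTop.2 ⟨1, hC⟩))
      (hP2.tendsto_deriv_w_atTop hsol hreg)
  have hw : Tendsto (fun r => w r * (1 - w r ^ 2)) atTop (𝓝 (L * (1 - L ^ 2))) :=
    hL.mul (tendsto_const_nhds.sub (hL.pow 2))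
  have := (hPhi.add hw).neg.div (hP2.tendsto_A_atTop hsol hreg) one_ne_zero
  rw [zero_add, div_one] at this
  refine this.congr' ?_
  filter_upwards [eventually_gt_atTop 0] with r hr
  rw [Pi.div_apply, div_eq_iff (hP2 r hr).2.2.ne']
  linear_combination -hsol.yangMills hr

lemma eventually_deriv_deriv_w_mul_w_le (hP2 : PossibilityP2 w A)
    (hsol : IsBMSolutionOn w A (Ioi 0)) (hreg : RegularAtOrigin w A)
    (h0 : Tendsto w atTop (𝓝 0)) (hpos : ∀ r, 0 < r → 0 < w r) :
    ∀ᶠ r in atTop, deriv (deriv w) r * w r ≤ deriv w r ^ 2 / 2 := by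
  obtain ⟨C, hC⟩ := hP2.exists_abs_Phi_le hsol hreg
  have hC0 : 0 ≤ C := (abs_nonneg _).trans (hC 1 le_rfl)
  filter_upwards [eventually_ge_atTop 1, eventually_ge_atTop (2 * C),
    (h0.pow 2).eventually (eventually_le_nhds (by norm_num : (0 : ℝ) ^ 2 < 1 / 2)),
    (hP2.tendsto_A_atTop hsol hreg).eventually (eventually_ge_nhds (by norm_num : (1 : ℝ) / 2 < 1))]
    with r hr1 hrC hw2 hA
  have hr : 0 < r := one_pos.trans_le hr1
  have hw := hpos r hr
  set v := -deriv w r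
  have hv : 0 < v := neg_pos.2 (hP2 r hr).2.1
  have hΦ : Phi w A r * v * w r ≤ C * v * w r :=
    mul_le_mul_of_nonneg_right (mul_le_mul_of_nonneg_right (le_of_abs_le (hC r hr1)) hv.le) hw.le
  have hsmall : w r ^ 2 / 2 ≤ w r ^ 2 * (1 - w r ^ 2) := by nlinarith [sq_nonneg (w r)]
  have hC2 : C ^ 2 ≤ r ^ 2 * A r := by nlinarith
  have hp : 0 < r ^ 2 * A r := by positivity
  refine le_of_mul_le_mul_left ?_ hp
  calc r ^ 2 * A r * (deriv (deriv w) r * w r)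
      = Phi w A r * v * w r - w r ^ 2 * (1 - w r ^ 2) := by
        linear_combination w r * hsol.yangMills hr
    _ ≤ C * v * w r - w r ^ 2 / 2 := sub_le_sub hΦ hsmall
    _ ≤ C ^ 2 * v ^ 2 / 2 := by nlinarith [sq_nonneg (C * v - w r)]
    _ ≤ r ^ 2 * A r * (deriv w r ^ 2 / 2) := by
        nlinarith [mul_le_mul_of_nonneg_right hC2 (sq_nonneg v)]

lemma not_tendsto_w_zero (hP2 : PossibilityP2 w A) (hsol : IsBMSolutionOn w A (Ioi 0))
    (hreg : RegularAtOrigin w A) : ¬ Tendsto w atTop (𝓝 0) := by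
  intro h0
  obtain ⟨L, hL, hLw⟩ := hP2.exists_tendsto_w hsol
  obtain rfl : L = 0 := tendsto_nhds_unique hL h0
  -- With `g = -w'/w`, the inequality `w'' w ≤ w'² / 2` is the Riccati inequality `g' ≥ g² / 2`.
  refine not_eventually_pos_of_sq_le_deriv (g := fun r => -deriv w r / w r)
    (g' := fun r => (-deriv (deriv w) r * w r - -deriv w r * deriv w r) / w r ^ 2)
    (half_pos one_pos) ?_ ?_ ?_
  · filter_upwards [eventually_gt_atTop 0] with r hr
    exact ((hsol.hasDerivAt_deriv_w isOpen_Ioi hr).neg.div (hsol.hasDerivAt_w isOpen_Ioi hr)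
      (hLw r hr).ne')
  · filter_upwards [hP2.eventually_deriv_deriv_w_mul_w_le hsol hreg h0 hLw,
      eventually_gt_atTop 0] with r hr hr0
    have := hLw r hr0
    rw [div_pow, neg_sq, mul_div_assoc', div_le_div_iff_of_pos_right (by positivity)]
    linarith
  · filter_upwards [eventually_gt_atTop 0] with r hr
    exact div_pos (neg_pos.2 (hP2 r hr).2.1) (hLw r hr)

end PossibilityP2

theorem stmt7_general (w A : ℝ → ℝ)
    (hsol : IsBMSolutionOn w A (Ioi 0))
    (hreg : RegularAtOrigin w A)
    (hP2 : ∀ r : ℝ, 0 < r → -1 < w r ∧ deriv w r < 0 ∧ 0 < A r) :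
    Tendsto w atTop (𝓝 (-1)) ∧
    Tendsto (deriv w) atTop (𝓝 0) ∧
    Tendsto A atTop (𝓝 1) := by
  have hP2 : PossibilityP2 w A := hP2
  obtain ⟨L, hL, hLw⟩ := hP2.exists_tendsto_w hsol
  have hw' := hP2.tendsto_deriv_w_atTop hsol hreg
  have hκ : L * (1 - L ^ 2) = 0 := by
    simpa using eq_zero_of_tendsto_of_tendsto_mul_deriv hL
      (by filter_upwards [eventually_gt_atTop 0] with r hr using hsol.hasDerivAt_w isOpen_Ioi hr)
      (tendsto_mul_deriv_of_tendsto_sq_mul_deriv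
        (by filter_upwards [eventually_gt_atTop 0] with r hr
              using hsol.hasDerivAt_deriv_w isOpen_Ioi hr)
        hw' (hP2.tendsto_sq_mul_deriv_deriv_w hsol hreg hL))
  have hL1 : L < 1 := (hLw 1 one_pos).trans_le (hP2.w_le_one hsol hreg one_pos)
  have hL0 : L ≠ 0 := fun h => hP2.not_tendsto_w_zero hsol hreg (h ▸ hL)
  have hLm1 : L = -1 := by
    have h : (L + 1) * (1 - L) = 0 := by
      linear_combination (mul_eq_zero.1 hκ).resolve_left hL0
    linarith [(mul_eq_zero.1 h).resolve_right (by linarith)]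
  exact ⟨hLm1 ▸ hL, hw', hP2.tendsto_A_atTop hsol hreg⟩

/-- **Possibility (P₂) gives a connecting orbit.** If `(w, A)` solves
(2a)–(2b) on `(0, ∞)` with the regularity conditions and `w''(0⁺) = -λ`,
`λ > 0`, and for all `r > 0` one has `w(r) > -1`, `w'(r) < 0`, `A(r) > 0`,
then `w → -1`, `w' → 0` and `A → 1` as `r → ∞`. -/
theorem stmt7 (lam : ℝ) (hlam : 0 < lam) (w A : ℝ → ℝ)
    (hsol : IsBMSolutionOn w A (Ioi 0))
    (hreg : RegularAtOrigin w A)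
    (hsecond : SecondDerivAtOrigin w lam)
    (hP2 : ∀ r : ℝ, 0 < r → -1 < w r ∧ deriv w r < 0 ∧ 0 < A r) :
    Tendsto w atTop (𝓝 (-1)) ∧
    Tendsto (deriv w) atTop (𝓝 0) ∧
    Tendsto A atTop (𝓝 1) :=
  stmt7_general w A hsol hreg hP2
end

section
/- Let (w, A) be a solution of the Bartnik–McKinnon ODE system (2a)–(2b) on (0, ∞) with regularity conditions w(0⁺) = 1, w'(0⁺) = 0, A(0⁺) = 1, such that for all r > 0 one has −1 < w(r) < 1, w'(r) < 0, A(r) > 0, and such that w(r) → −1, w'(r) → 0 as r → ∞. Then the total mass of the associated spacetime is finite: the limit lim_{r→∞} r(1 − A(r)) exists and is a finite real number. -/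
/-!
Write `A = 1 - 2m/r`. Equation (2b) says exactly that `(2m)' = 2w'²A + (1 - w²)²/r² ≥ 0`, so `2m`
is nondecreasing and, vanishing at `0⁺`, nonnegative; in particular `A ≤ 1`. Once `|w'| ≤ 1`, the
two terms of `(2m)'` are bounded by `-2w'` and `1/r²`, so `2m + 2w + 1/r` is nonincreasing. As
`w > -1`, this bounds `2m` from above, and a bounded nondecreasing function converges.
-/

open Set Filter Topology

theorem MonotoneOn.exists_tendsto_atTop_of_bddAbove {α β : Type*} [Preorder α] [IsDirectedOrder α]
    [ConditionallyCompleteLinearOrder β] [TopologicalSpace β] [OrderTopology β] {f : α → β}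
    {a : α} (hf : MonotoneOn f (Ici a)) (hb : BddAbove (f '' Ici a)) :
    ∃ m, Tendsto f atTop (𝓝 m) := by
  rw [image_eq_range] at hb
  exact ⟨_, tendsto_comp_val_Ici_atTop.1 <| tendsto_atTop_ciSup (fun x y h => hf x.2 y.2 h) hb⟩

theorem MonotoneOn.le_of_tendsto_nhdsGT {α β : Type*} [LinearOrder α] [TopologicalSpace α]
    [OrderTopology α] [DenselyOrdered α] [Preorder β] [TopologicalSpace β]
    [OrderClosedTopology β] {f : α → β} {a b : α} {L : β} (hf : MonotoneOn f (Ioi a))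
    (hL : Tendsto f (𝓝[>] a) (𝓝 L)) (hb : a < b) : L ≤ f b :=
  have := nhdsGT_neBot_of_exists_gt ⟨b, hb⟩
  le_of_tendsto hL <| eventually_of_mem (Ioo_mem_nhdsGT hb) fun _ hx => hf hx.1 hb hx.2.le

/-- The quantity `2m` of the parametrisation `A = 1 - 2m/r`. -/
noncomputable def twiceMass (A : ℝ → ℝ) (r : ℝ) : ℝ :=
  r * (1 - A r)

theorem hasDerivAt_twiceMass {A : ℝ → ℝ} {a r w₀ w₁ : ℝ} (hA : HasDerivAt A a r)
    (h2b : r * a + (1 + 2 * w₁ ^ 2) * A r = 1 - (1 - w₀ ^ 2) ^ 2 / r ^ 2) :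
    HasDerivAt (twiceMass A) (2 * w₁ ^ 2 * A r + (1 - w₀ ^ 2) ^ 2 / r ^ 2) r := by
  refine ((hasDerivAt_id r).mul ((hasDerivAt_const r 1).sub hA)).congr_deriv ?_
  simp only [id, Pi.sub_apply]
  linear_combination -h2b

namespace IsBMSolutionOn

variable {w A : ℝ → ℝ} (hsol : IsBMSolutionOn w A (Ioi 0))
include hsol

theorem hasDerivAt_w_s9 {r : ℝ} (hr : 0 < r) : HasDerivAt w (deriv w r) r :=
  ((hsol.1.differentiableOn two_ne_zero).differentiableAt (Ioi_mem_nhds hr)).hasDerivAt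

theorem hasDerivAt_A_s9 {r : ℝ} (hr : 0 < r) : HasDerivAt A (deriv A r) r :=
  ((hsol.2.1.differentiableOn one_ne_zero).differentiableAt (Ioi_mem_nhds hr)).hasDerivAt

theorem hasDerivAt_twiceMass {r : ℝ} (hr : 0 < r) :
    HasDerivAt (twiceMass A) (2 * deriv w r ^ 2 * A r + (1 - w r ^ 2) ^ 2 / r ^ 2) r :=
  _root_.hasDerivAt_twiceMass (hsol.hasDerivAt_A_s9 hr) (hsol.2.2.2 r hr)

theorem monotoneOn_twiceMass (hA : ∀ r, 0 < r → 0 ≤ A r) : MonotoneOn (twiceMass A) (Ioi 0) := by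
  refine monotoneOn_of_hasDerivWithinAt_nonneg (convex_Ioi 0)
    (fun r hr => (hsol.hasDerivAt_twiceMass hr).continuousAt.continuousWithinAt)
    (fun r hr => (hsol.hasDerivAt_twiceMass (interior_subset hr)).hasDerivWithinAt)
    fun r hr => ?_
  have hr : 0 < r := interior_subset hr
  have := hA r hr
  positivity

theorem A_le_one (hA : ∀ r, 0 < r → 0 ≤ A r) (hA0 : Tendsto A (𝓝[>] 0) (𝓝 1)) {r : ℝ}
    (hr : 0 < r) : A r ≤ 1 := by
  have hm0 : Tendsto (twiceMass A) (𝓝[>] 0) (𝓝 0) := by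
    show Tendsto (fun r => r * (1 - A r)) _ _
    simpa using (tendsto_nhdsWithin_of_tendsto_nhds tendsto_id).mul (hA0.const_sub 1)
  have := (hsol.monotoneOn_twiceMass hA).le_of_tendsto_nhdsGT hm0 hr
  exact sub_nonneg.1 (nonneg_of_mul_nonneg_right this hr)

theorem antitoneOn_twiceMass_add {R : ℝ} (hR : 0 < R)
    (hbd : ∀ r, R ≤ r → -1 ≤ deriv w r ∧ deriv w r ≤ 0 ∧ 0 ≤ A r ∧ A r ≤ 1 ∧ w r ^ 2 ≤ 1) :
    AntitoneOn (fun r => twiceMass A r + 2 * w r + r⁻¹) (Ici R) := by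
  have hderiv : ∀ r, R ≤ r → HasDerivAt (fun r => twiceMass A r + 2 * w r + r⁻¹)
      (2 * deriv w r ^ 2 * A r + (1 - w r ^ 2) ^ 2 / r ^ 2 + 2 * deriv w r + -(r ^ 2)⁻¹) r :=
    fun r hr => have hr0 := hR.trans_le hr
      ((hsol.hasDerivAt_twiceMass hr0).add ((hsol.hasDerivAt_w_s9 hr0).const_mul 2)).add
        (hasDerivAt_inv hr0.ne')
  refine antitoneOn_of_hasDerivWithinAt_nonpos (convex_Ici R)
    (fun r hr => (hderiv r hr).continuousAt.continuousWithinAt)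
    (fun r hr => (hderiv r (interior_subset hr)).hasDerivWithinAt) fun r hr => ?_
  obtain ⟨hw'₁, hw'₀, hA₀, hA₁, hw₁⟩ := hbd r (interior_subset hr)
  have hr0 : 0 < r := hR.trans_le (interior_subset hr)
  have hkin : 2 * deriv w r ^ 2 * A r ≤ -(2 * deriv w r) := by nlinarith
  have hpot : (1 - w r ^ 2) ^ 2 / r ^ 2 ≤ (r ^ 2)⁻¹ := by
    rw [div_eq_mul_inv]
    exact mul_le_of_le_one_left (by positivity) (pow_le_one₀ (by linarith) (by nlinarith))
  linarith

theorem bddAbove_twiceMass {R : ℝ} (hR : 0 < R)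
    (hbd : ∀ r, R ≤ r → -1 ≤ deriv w r ∧ deriv w r ≤ 0 ∧ 0 ≤ A r ∧ A r ≤ 1 ∧ w r ^ 2 ≤ 1) :
    BddAbove (twiceMass A '' Ici R) := by
  refine ⟨twiceMass A R + 2 * w R + R⁻¹ + 2, ?_⟩
  rintro _ ⟨r, hr, rfl⟩
  have hanti := hsol.antitoneOn_twiceMass_add hR hbd self_mem_Ici hr hr
  have hw : -1 ≤ w r := by nlinarith [(hbd r hr).2.2.2.2]
  have : 0 ≤ r⁻¹ := inv_nonneg.2 (hR.trans_le hr).le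
  simp only at hanti
  linarith

end IsBMSolutionOn

theorem stmt9_general (w A : ℝ → ℝ)
    (hsol : IsBMSolutionOn w A (Ioi 0))
    (hreg : RegularAtOrigin w A)
    (horbit : ∀ r : ℝ, 0 < r → -1 < w r ∧ w r < 1 ∧ deriv w r < 0 ∧ 0 < A r)
    (hw' : Tendsto (deriv w) atTop (𝓝 0)) :
    ∃ m : ℝ, Tendsto (fun r : ℝ => r * (1 - A r)) atTop (𝓝 m) := by
  have hA : ∀ r, 0 < r → 0 ≤ A r := fun r hr => (horbit r hr).2.2.2.le
  obtain ⟨R, hR⟩ := ((eventually_gt_atTop 0).and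
    (hw'.eventually (Icc_mem_nhds neg_one_lt_zero one_pos))).exists_forall_of_atTop
  have hR0 : 0 < R := (hR R le_rfl).1
  refine (hsol.monotoneOn_twiceMass hA).mono (Ici_subset_Ioi.2 hR0)
    |>.exists_tendsto_atTop_of_bddAbove (hsol.bddAbove_twiceMass hR0 fun r hr => ?_)
  obtain ⟨hr0, hw'r, -⟩ := hR r hr
  obtain ⟨hw₁, hw₂, hw'₀, hA₀⟩ := horbit r hr0
  exact ⟨hw'r, hw'₀.le, hA₀.le, hsol.A_le_one hA hreg.2.2 hr0, by nlinarith⟩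

/-- **Finite total mass.** If `(w, A)` solves (2a)–(2b) on `(0, ∞)` with the
regularity conditions, stays in `-1 < w < 1`, `w' < 0`, `A > 0`, and
`w → -1`, `w' → 0` as `r → ∞`, then `lim_{r→∞} r(1 - A(r))` exists and is
finite. -/
theorem stmt9 (w A : ℝ → ℝ)
    (hsol : IsBMSolutionOn w A (Ioi 0))
    (hreg : RegularAtOrigin w A)
    (horbit : ∀ r : ℝ, 0 < r → -1 < w r ∧ w r < 1 ∧ deriv w r < 0 ∧ 0 < A r)
    (hw : Tendsto w atTop (𝓝 (-1)))
    (hw' : Tendsto (deriv w) atTop (𝓝 0)) :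
    ∃ m : ℝ, Tendsto (fun r : ℝ => r * (1 - A r)) atTop (𝓝 m) :=
  stmt9_general w A hsol hreg horbit hw'
end
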